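/- arXiv:1706.05082 — 5 statements merged into one kernel-verified Lean document; each statement's English description precedes it below -/
import Mathlib

section
/- Let M be a qDTMC, Φ1, Φ2 negation-free state formulas, k ∈ ℕ, and θ ∈ [0,1]. The formula Pr_{≥θ}(Φ1 U^{≤k} Φ2) evaluates to T in the qDTMC M (i.e., µ{π ∈ Path(s_init) : (π, Φ1 U^{≤k} Φ2) = T in M} ≥ θ) if and only if s_init satisfies Pr_{≥θ}(Φ1 U^{≤k} Φ2) under standard two-valued PCTL semantics in the binary DTMC M^(1) obtained from M by relabeling every ? to F. -/
open MeasureTheory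

/-- Three truth values: `F` (false), `Q` (unknown, "?"), `T` (true). -/
inductive TV : Type
  | F : TV
  | Q : TV
  | T : TV
  deriving DecidableEq

namespace TV

/-- Kleene's strong three-valued negation. -/
def not : TV → TV
  | T => F
  | Q => Q
  | F => T

/-- Kleene's strong three-valued conjunction (min w.r.t. F < ? < T). -/
def and : TV → TV → TV
  | T, x => x
  | Q, T => Q
  | Q, Q => Q
  | Q, F => F
  | F, _ => F

/-- Kleene's strong three-valued disjunction (max w.r.t. F < ? < T). -/
def or : TV → TV → TV
  | T, _ => T
  | Q, T => T
  | Q, Q => Q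
  | Q, F => Q
  | F, x => x

end TV

/-- Negation-free state formulas: built from atomic propositions and the
constants T, F using ∧ and ∨. -/
inductive SForm (AP : Type) : Type
  | tt : SForm AP
  | ff : SForm AP
  | atom : AP → SForm AP
  | and : SForm AP → SForm AP → SForm AP
  | or : SForm AP → SForm AP → SForm AP

/-- Three-valued (Kleene) evaluation of a negation-free state formula in a state,
given a three-valued labeling `L`. -/
def sEval {S AP : Type} (L : S → AP → TV) : SForm AP → S → TV
  | SForm.tt, _ => TV.T
  | SForm.ff, _ => TV.F
  | SForm.atom a, s => L s a
  | SForm.and φ ψ, s => (sEval L φ s).and (sEval L ψ s)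
  | SForm.or φ ψ, s => (sEval L φ s).or (sEval L ψ s)

/-- Standard two-valued evaluation of a state formula in a binary DTMC
with (two-valued) labeling `Lb`. -/
def sSat {S AP : Type} (Lb : S → AP → Prop) : SForm AP → S → Prop
  | SForm.tt, _ => True
  | SForm.ff, _ => False
  | SForm.atom a, s => Lb s a
  | SForm.and φ ψ, s => sSat Lb φ s ∧ sSat Lb ψ s
  | SForm.or φ ψ, s => sSat Lb φ s ∨ sSat Lb ψ s

/-- A qDTMC: a DTMC with three-valued labeling.  The transition function takes
values in [0,1] (here: `NNReal`, with each row summing to 1, hence each entry ≤ 1). -/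
structure qDTMC (S AP : Type) [Fintype S] : Type where
  P : S → S → NNReal
  stoch : ∀ s : S, (∑ s' : S, P s s') = 1
  init : S
  L : S → AP → TV

namespace qDTMC

variable {S AP : Type} [Fintype S]

/-- `π` is a path of `M` starting at `s`. -/
def IsPath (M : qDTMC S AP) (s : S) (π : ℕ → S) : Prop :=
  π 0 = s ∧ ∀ i : ℕ, 0 < M.P (π i) (π (i + 1))

/-- The binary labeling of M⁽¹⁾: every `?` is relabeled to false. -/
def L1 (M : qDTMC S AP) : S → AP → Prop := fun s a => M.L s a = TV.T

/-- The binary labeling of M⁽²⁾: every `?` is relabeled to true. -/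
def L2 (M : qDTMC S AP) : S → AP → Prop := fun s a => M.L s a ≠ TV.F

/-- `μ` is the probability measure on paths of `M` from `s`, determined on cylinder
sets by the products of transition probabilities. -/
def IsPathMeasure [MeasurableSpace S] (M : qDTMC S AP) (s : S)
    (μ : Measure (ℕ → S)) : Prop :=
  IsProbabilityMeasure μ ∧
  ∀ (n : ℕ) (ω : ℕ → S), ω 0 = s →
    μ {π : ℕ → S | ∀ i ≤ n, π i = ω i} =
      ∏ i ∈ Finset.range n, (M.P (ω i) (ω (i + 1)) : ENNReal)

end qDTMC

/-- Path formulas: X Φ, Φ₁ U^{≤k} Φ₂ and Φ₁ U Φ₂ over negation-free state formulas. -/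
inductive PForm (AP : Type) : Type
  | next : SForm AP → PForm AP
  | buntil : SForm AP → ℕ → SForm AP → PForm AP
  | uuntil : SForm AP → SForm AP → PForm AP

open Classical in
/-- Three-valued evaluation of a path formula on a path `π`. -/
noncomputable def pEval {S AP : Type} (L : S → AP → TV) : PForm AP → (ℕ → S) → TV
  | PForm.next Φ, π => sEval L Φ (π 1)
  | PForm.buntil Φ1 k Φ2, π =>
      if ∃ i ≤ k, sEval L Φ2 (π i) = TV.T ∧ ∀ i' < i, sEval L Φ1 (π i') = TV.T then TV.T
      else if (∀ i ≤ k, sEval L Φ2 (π i) = TV.F) ∨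
          (∃ i ≤ k, sEval L Φ2 (π i) ≠ TV.F ∧ ∃ i' < i, sEval L Φ1 (π i') = TV.F) then TV.F
      else TV.Q
  | PForm.uuntil Φ1 Φ2, π =>
      if ∃ i, sEval L Φ2 (π i) = TV.T ∧ ∀ i' < i, sEval L Φ1 (π i') = TV.T then TV.T
      else if (∀ i, sEval L Φ2 (π i) = TV.F) ∨
          (∃ i, sEval L Φ2 (π i) ≠ TV.F ∧ ∃ i' < i, sEval L Φ1 (π i') = TV.F) then TV.F
      else TV.Q

/-- Standard two-valued PCTL path satisfaction in a binary DTMC with labeling `Lb`. -/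
def pSat {S AP : Type} (Lb : S → AP → Prop) : PForm AP → (ℕ → S) → Prop
  | PForm.next Φ, π => sSat Lb Φ (π 1)
  | PForm.buntil Φ1 k Φ2, π => ∃ i ≤ k, sSat Lb Φ2 (π i) ∧ ∀ i' < i, sSat Lb Φ1 (π i')
  | PForm.uuntil Φ1 Φ2, π => ∃ i, sSat Lb Φ2 (π i) ∧ ∀ i' < i, sSat Lb Φ1 (π i')

lemma sSat_L1_iff {S AP : Type} [Fintype S] (M : qDTMC S AP) :
    ∀ (Φ : SForm AP) (s : S), sSat M.L1 Φ s ↔ sEval M.L Φ s = TV.T := by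
  intro Φ
  induction Φ with
  | tt => intro s; simp [sSat, sEval]
  | ff => intro s; simp [sSat, sEval]
  | atom a => intro s; simp [sSat, sEval, qDTMC.L1]
  | and φ ψ ihφ ihψ =>
      intro s
      simp only [sSat, sEval, ihφ, ihψ]
      cases h1 : sEval M.L φ s <;> cases h2 : sEval M.L ψ s <;> simp [TV.and]
  | or φ ψ ihφ ihψ =>
      intro s
      simp only [sSat, sEval, ihφ, ihψ]
      cases h1 : sEval M.L φ s <;> cases h2 : sEval M.L ψ s <;> simp [TV.or]

/-- Pr_{≥θ}(Φ1 U^{≤k} Φ2) evaluates to T in the qDTMC M iff s_init satisfies it in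
the binary DTMC M⁽¹⁾ (every ? relabeled to F). -/
theorem stmt4 {S AP : Type} [Fintype S] [Nonempty S] [Fintype AP]
    [MeasurableSpace S] [DiscreteMeasurableSpace S]
    (M : qDTMC S AP) (μ : Measure (ℕ → S)) (hμ : M.IsPathMeasure M.init μ)
    (Φ1 Φ2 : SForm AP) (k : ℕ) (θ : ℝ) (hθ : θ ∈ Set.Icc (0 : ℝ) 1) :
    ENNReal.ofReal θ ≤ μ {π : ℕ → S | M.IsPath M.init π ∧ pEval M.L (PForm.buntil Φ1 k Φ2) π = TV.T} ↔
      ENNReal.ofReal θ ≤ μ {π : ℕ → S | M.IsPath M.init π ∧ pSat M.L1 (PForm.buntil Φ1 k Φ2) π} := by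
  have hset : {π : ℕ → S | M.IsPath M.init π ∧ pEval M.L (PForm.buntil Φ1 k Φ2) π = TV.T}
      = {π : ℕ → S | M.IsPath M.init π ∧ pSat M.L1 (PForm.buntil Φ1 k Φ2) π} := by
    ext π
    simp only [Set.mem_setOf_eq, and_congr_right_iff]
    intro _
    constructor
    · intro h
      by_cases hc : ∃ i ≤ k, sEval M.L Φ2 (π i) = TV.T ∧ ∀ i' < i, sEval M.L Φ1 (π i') = TV.T
      · obtain ⟨i, hik, h2, h1⟩ := hc
        exact ⟨i, hik, (sSat_L1_iff M Φ2 _).2 h2, fun i' hi' => (sSat_L1_iff M Φ1 _).2 (h1 i' hi')⟩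
      · simp only [pEval, if_neg hc] at h
        split at h <;> simp_all
    · rintro ⟨i, hik, h2, h1⟩
      have hc : ∃ i ≤ k, sEval M.L Φ2 (π i) = TV.T ∧ ∀ i' < i, sEval M.L Φ1 (π i') = TV.T :=
        ⟨i, hik, (sSat_L1_iff M Φ2 _).1 h2, fun i' hi' => (sSat_L1_iff M Φ1 _).1 (h1 i' hi')⟩
      simp [pEval, if_pos hc]
  rw [hset]
end

section
/- Let M be a qDTMC and let ψ be a path formula of the form X Φ, Φ1 U^{≤k} Φ2, or Φ1 U Φ2, where Φ, Φ1, Φ2 are negation-free state formulas. For every path π of M, the three-valued evaluation (π, ψ) in M equals T if and only if π satisfies ψ under standard two-valued PCTL semantics in the binary DTMC M^(1) obtained from M by relabeling every ? to F. -/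
open MeasureTheory

lemma sEval_T_iff {S AP : Type} (L : S → AP → TV) (Φ : SForm AP) (s : S) :
    sEval L Φ s = TV.T ↔ sSat (fun s a => L s a = TV.T) Φ s := by
  induction Φ with
  | tt => simp [sEval, sSat]
  | ff => simp [sEval, sSat]
  | atom a => simp [sEval, sSat]
  | and φ ψ ih1 ih2 =>
      simp only [sEval, sSat, ← ih1, ← ih2]
      rcases h1 : sEval L φ s <;> rcases h2 : sEval L ψ s <;> simp [TV.and]
  | or φ ψ ih1 ih2 =>
      simp only [sEval, sSat, ← ih1, ← ih2]
      rcases h1 : sEval L φ s <;> rcases h2 : sEval L ψ s <;> simp [TV.or]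

/-- For every path π of the qDTMC M and every path formula ψ (of the form X Φ,
Φ1 U^{≤k} Φ2 or Φ1 U Φ2 over negation-free state formulas), the three-valued
evaluation (π, ψ) equals T iff π satisfies ψ under two-valued PCTL semantics in M⁽¹⁾. -/
theorem stmt10 {S AP : Type} [Fintype S] [Nonempty S] [Fintype AP]
    [MeasurableSpace S] [DiscreteMeasurableSpace S]
    (M : qDTMC S AP) (ψ : PForm AP) (π : ℕ → S)
    (hπ : ∀ i : ℕ, 0 < M.P (π i) (π (i + 1))) :
    pEval M.L ψ π = TV.T ↔ pSat M.L1 ψ π := by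
  cases ψ with
  | next Φ => exact sEval_T_iff M.L Φ (π 1)
  | buntil Φ1 k Φ2 =>
      simp only [pEval, pSat, qDTMC.L1]
      by_cases h : ∃ i ≤ k, sEval M.L Φ2 (π i) = TV.T ∧ ∀ i' < i, sEval M.L Φ1 (π i') = TV.T
      · simp only [if_pos h, true_iff]
        obtain ⟨i, hi, h2, h1⟩ := h
        exact ⟨i, hi, (sEval_T_iff _ _ _).mp h2, fun j hj => (sEval_T_iff _ _ _).mp (h1 j hj)⟩
      · rw [if_neg h]
        constructor
        · intro hc; split at hc <;> simp_all
        · rintro ⟨i, hi, h2, h1⟩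
          exact absurd ⟨i, hi, (sEval_T_iff _ _ _).mpr h2,
            fun j hj => (sEval_T_iff _ _ _).mpr (h1 j hj)⟩ h
  | uuntil Φ1 Φ2 =>
      simp only [pEval, pSat, qDTMC.L1]
      by_cases h : ∃ i, sEval M.L Φ2 (π i) = TV.T ∧ ∀ i' < i, sEval M.L Φ1 (π i') = TV.T
      · simp only [if_pos h, true_iff]
        obtain ⟨i, h2, h1⟩ := h
        exact ⟨i, (sEval_T_iff _ _ _).mp h2, fun j hj => (sEval_T_iff _ _ _).mp (h1 j hj)⟩
      · rw [if_neg h]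
        constructor
        · intro hc; split at hc <;> simp_all
        · rintro ⟨i, h2, h1⟩
          exact absurd ⟨i, (sEval_T_iff _ _ _).mpr h2,
            fun j hj => (sEval_T_iff _ _ _).mpr (h1 j hj)⟩ h
end

section
/- Let M be a qDTMC, s ∈ S, and let ψ be a path formula of the form X Φ, Φ1 U^{≤k} Φ2, or Φ1 U Φ2 with Φ, Φ1, Φ2 negation-free state formulas. Since the binary DTMC M^(1) has the same states and transition probabilities as M, the probability measure µ on Path(s) satisfies µ{π ∈ Path(s) : (π, ψ) = T in M} = µ{π ∈ Path(s) : π ⊨ ψ in M^(1)}, where on the right ψ is evaluated by standard two-valued PCTL semantics in M^(1). -/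
open MeasureTheory

lemma pEval_T_iff {S AP : Type} (L : S → AP → TV) (ψ : PForm AP) (π : ℕ → S) :
    pEval L ψ π = TV.T ↔ pSat (fun s a => L s a = TV.T) ψ π := by
  cases ψ with
  | next Φ => simpa [pEval, pSat] using sEval_T_iff L Φ (π 1)
  | buntil Φ1 k Φ2 =>
      simp only [pEval, pSat]
      split_ifs with h1 h2
      · simp only [iff_true_intro rfl, true_iff]
        obtain ⟨i, hik, h2, h1'⟩ := h1
        exact ⟨i, hik, (sEval_T_iff L Φ2 (π i)).1 h2,
          fun i' hi' => (sEval_T_iff L Φ1 (π i')).1 (h1' i' hi')⟩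
      all_goals
        constructor
        · intro h; simp at h
        · rintro ⟨i, hik, h2, h1'⟩
          exact absurd ⟨i, hik, (sEval_T_iff L Φ2 (π i)).2 h2,
            fun i' hi' => (sEval_T_iff L Φ1 (π i')).2 (h1' i' hi')⟩ h1
  | uuntil Φ1 Φ2 =>
      simp only [pEval, pSat]
      split_ifs with h1 h2
      · simp only [iff_true_intro rfl, true_iff]
        obtain ⟨i, h2, h1'⟩ := h1
        exact ⟨i, (sEval_T_iff L Φ2 (π i)).1 h2,
          fun i' hi' => (sEval_T_iff L Φ1 (π i')).1 (h1' i' hi')⟩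
      all_goals
        constructor
        · intro h; simp at h
        · rintro ⟨i, h2, h1'⟩
          exact absurd ⟨i, (sEval_T_iff L Φ2 (π i)).2 h2,
            fun i' hi' => (sEval_T_iff L Φ1 (π i')).2 (h1' i' hi')⟩ h1

/-- Since M⁽¹⁾ has the same states and transition probabilities as M, the path
measure of the set of paths from s where ψ evaluates three-valuedly to T in M equals
the measure of the set of paths satisfying ψ two-valuedly in M⁽¹⁾. -/
theorem stmt12 {S AP : Type} [Fintype S] [Nonempty S] [Fintype AP]
    [MeasurableSpace S] [DiscreteMeasurableSpace S]
    (M : qDTMC S AP) (s : S) (μ : Measure (ℕ → S)) (hμ : M.IsPathMeasure s μ)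
    (ψ : PForm AP) :
    μ {π : ℕ → S | M.IsPath s π ∧ pEval M.L ψ π = TV.T} =
      μ {π : ℕ → S | M.IsPath s π ∧ pSat M.L1 ψ π} := by
  congr 1
  ext π
  simp only [Set.mem_setOf_eq, qDTMC.L1]
  rw [pEval_T_iff]
  rfl
end

section
/- Let M be a qDTMC, s ∈ S, and let ψ be a path formula of the form X Φ, Φ1 U^{≤k} Φ2, or Φ1 U Φ2 with Φ, Φ1, Φ2 negation-free state formulas. Then the three sets {π ∈ Path(s) : (π, ψ) = T}, {π ∈ Path(s) : (π, ψ) = F}, and {π ∈ Path(s) : (π, ψ) = ?} are pairwise disjoint measurable subsets of Path(s) whose union is Path(s); in particular µ{(π,ψ)=T} + µ{(π,ψ)=F} + µ{(π,ψ)=?} = 1. -/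
open MeasureTheory

section MeasHelpers
variable {α : Type*} [MeasurableSpace α]

lemma mexists {Q : ℕ → α → Prop} (h : ∀ i, MeasurableSet {x | Q i x}) :
    MeasurableSet {x | ∃ i, Q i x} := by
  rw [Set.setOf_exists]; exact .iUnion h

lemma mforall {Q : ℕ → α → Prop} (h : ∀ i, MeasurableSet {x | Q i x}) :
    MeasurableSet {x | ∀ i, Q i x} := by
  rw [Set.setOf_forall]; exact .iInter h

lemma mconstand (c : Prop) {Q : α → Prop} (h : MeasurableSet {x | Q x}) :
    MeasurableSet {x | c ∧ Q x} := by
  by_cases hc : c <;> simp [hc, h]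

lemma mconstimp (c : Prop) {Q : α → Prop} (h : MeasurableSet {x | Q x}) :
    MeasurableSet {x | c → Q x} := by
  by_cases hc : c <;> simp [hc, h]

lemma mand {P Q : α → Prop} (h1 : MeasurableSet {x | P x}) (h2 : MeasurableSet {x | Q x}) :
    MeasurableSet {x | P x ∧ Q x} := by rw [Set.setOf_and]; exact h1.inter h2

lemma mor {P Q : α → Prop} (h1 : MeasurableSet {x | P x}) (h2 : MeasurableSet {x | Q x}) :
    MeasurableSet {x | P x ∨ Q x} := by rw [Set.setOf_or]; exact h1.union h2

lemma mnot {P : α → Prop} (h : MeasurableSet {x | P x}) :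
    MeasurableSet {x | ¬ P x} := h.compl

end MeasHelpers

section CoordHelpers
variable {S : Type} [MeasurableSpace S] [DiscreteMeasurableSpace S]

lemma mcoord (p : S → Prop) (i : ℕ) : MeasurableSet {π : ℕ → S | p (π i)} :=
  measurable_pi_apply i MeasurableSet.of_discrete

lemma mcoord2 [Countable S] (p : S → S → Prop) (i j : ℕ) :
    MeasurableSet {π : ℕ → S | p (π i) (π j)} := by
  have h : {π : ℕ → S | p (π i) (π j)} = ⋃ a : S, ({π : ℕ → S | π i = a} ∩ {π | p a (π j)}) := by
    ext π; simp only [Set.mem_setOf_eq, Set.mem_iUnion, Set.mem_inter_iff]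
    constructor
    · intro h; exact ⟨π i, rfl, h⟩
    · rintro ⟨a, ha, h⟩; rwa [ha]
  rw [h]
  exact .iUnion fun a => (mcoord (· = a) i).inter (mcoord (p a) j)

end CoordHelpers

section PEvalChar
variable {S AP : Type} (L : S → AP → TV)

lemma buntil_eq_T (Φ1 Φ2 : SForm AP) (k : ℕ) (π : ℕ → S) :
    pEval L (PForm.buntil Φ1 k Φ2) π = TV.T ↔
      (∃ i ≤ k, sEval L Φ2 (π i) = TV.T ∧ ∀ i' < i, sEval L Φ1 (π i') = TV.T) := by
  simp only [pEval]; split_ifs with h1 h2 <;> simp_all <;> try tauto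

lemma buntil_eq_F (Φ1 Φ2 : SForm AP) (k : ℕ) (π : ℕ → S) :
    pEval L (PForm.buntil Φ1 k Φ2) π = TV.F ↔
      (¬ (∃ i ≤ k, sEval L Φ2 (π i) = TV.T ∧ ∀ i' < i, sEval L Φ1 (π i') = TV.T)) ∧
      ((∀ i ≤ k, sEval L Φ2 (π i) = TV.F) ∨
        (∃ i ≤ k, sEval L Φ2 (π i) ≠ TV.F ∧ ∃ i' < i, sEval L Φ1 (π i') = TV.F)) := by
  simp only [pEval]; split_ifs with h1 h2 <;> simp_all <;> try tauto

lemma uuntil_eq_T (Φ1 Φ2 : SForm AP) (π : ℕ → S) :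
    pEval L (PForm.uuntil Φ1 Φ2) π = TV.T ↔
      (∃ i, sEval L Φ2 (π i) = TV.T ∧ ∀ i' < i, sEval L Φ1 (π i') = TV.T) := by
  simp only [pEval]; split_ifs with h1 h2 <;> simp_all <;> try tauto

lemma uuntil_eq_F (Φ1 Φ2 : SForm AP) (π : ℕ → S) :
    pEval L (PForm.uuntil Φ1 Φ2) π = TV.F ↔
      (¬ (∃ i, sEval L Φ2 (π i) = TV.T ∧ ∀ i' < i, sEval L Φ1 (π i') = TV.T)) ∧
      ((∀ i, sEval L Φ2 (π i) = TV.F) ∨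
        (∃ i, sEval L Φ2 (π i) ≠ TV.F ∧ ∃ i' < i, sEval L Φ1 (π i') = TV.F)) := by
  simp only [pEval]; split_ifs with h1 h2 <;> simp_all <;> try tauto

end PEvalChar

section PEvalMeas
variable {S AP : Type} [MeasurableSpace S] [DiscreteMeasurableSpace S]

lemma pEval_measT (L : S → AP → TV) (ψ : PForm AP) :
    MeasurableSet {π : ℕ → S | pEval L ψ π = TV.T} := by
  cases ψ with
  | next Φ => exact mcoord (fun t => sEval L Φ t = TV.T) 1
  | buntil Φ1 k Φ2 =>
      simp only [buntil_eq_T]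
      exact mexists fun i => mconstand _ (mand (mcoord (fun t => sEval L Φ2 t = TV.T) i)
        (mforall fun i' => mconstimp _ (mcoord (fun t => sEval L Φ1 t = TV.T) i')))
  | uuntil Φ1 Φ2 =>
      simp only [uuntil_eq_T]
      exact mexists fun i => mand (mcoord (fun t => sEval L Φ2 t = TV.T) i)
        (mforall fun i' => mconstimp _ (mcoord (fun t => sEval L Φ1 t = TV.T) i'))

lemma pEval_measF (L : S → AP → TV) (ψ : PForm AP) :
    MeasurableSet {π : ℕ → S | pEval L ψ π = TV.F} := by
  cases ψ with
  | next Φ => exact mcoord (fun t => sEval L Φ t = TV.F) 1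
  | buntil Φ1 k Φ2 =>
      simp only [buntil_eq_F]
      refine mand (mnot (mexists fun i => mconstand _ (mand (mcoord (fun t => sEval L Φ2 t = TV.T) i)
        (mforall fun i' => mconstimp _ (mcoord (fun t => sEval L Φ1 t = TV.T) i'))))) ?_
      refine mor (mforall fun i => mconstimp _ (mcoord (fun t => sEval L Φ2 t = TV.F) i)) ?_
      exact mexists fun i => mconstand _ (mand (mcoord (fun t => sEval L Φ2 t ≠ TV.F) i)
        (mexists fun i' => mconstand _ (mcoord (fun t => sEval L Φ1 t = TV.F) i')))
  | uuntil Φ1 Φ2 =>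
      simp only [uuntil_eq_F]
      refine mand (mnot (mexists fun i => mand (mcoord (fun t => sEval L Φ2 t = TV.T) i)
        (mforall fun i' => mconstimp _ (mcoord (fun t => sEval L Φ1 t = TV.T) i')))) ?_
      refine mor (mforall fun i => mcoord (fun t => sEval L Φ2 t = TV.F) i) ?_
      exact mexists fun i => mand (mcoord (fun t => sEval L Φ2 t ≠ TV.F) i)
        (mexists fun i' => mconstand _ (mcoord (fun t => sEval L Φ1 t = TV.F) i'))

lemma pEval_measQ (L : S → AP → TV) (ψ : PForm AP) :
    MeasurableSet {π : ℕ → S | pEval L ψ π = TV.Q} := by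
  have h : {π : ℕ → S | pEval L ψ π = TV.Q} =
      ({π : ℕ → S | pEval L ψ π = TV.T} ∪ {π : ℕ → S | pEval L ψ π = TV.F})ᶜ := by
    ext π
    simp only [Set.mem_setOf_eq, Set.mem_compl_iff, Set.mem_union]
    cases h : pEval L ψ π <;> simp
  rw [h]
  exact ((pEval_measT L ψ).union (pEval_measF L ψ)).compl

end PEvalMeas

section PathMeas
variable {S AP : Type} [Fintype S] [MeasurableSpace S] [DiscreteMeasurableSpace S]

lemma isPath_meas (M : qDTMC S AP) (s : S) :
    MeasurableSet {π : ℕ → S | M.IsPath s π} := by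
  have : Countable S := Finite.to_countable
  unfold qDTMC.IsPath
  exact mand (mcoord (· = s) 0) (mforall fun i => mcoord2 (fun a b => 0 < M.P a b) i (i+1))

lemma first_coord_one (M : qDTMC S AP) (s : S) (μ : Measure (ℕ → S))
    (hμ : M.IsPathMeasure s μ) : μ {π : ℕ → S | π 0 = s} = 1 := by
  have h := hμ.2 0 (fun _ => s) rfl
  simpa [Nat.le_zero] using h

lemma bad_null (M : qDTMC S AP) (s : S) (μ : Measure (ℕ → S))
    (hμ : M.IsPathMeasure s μ) (n : ℕ) :
    μ {π : ℕ → S | π 0 = s ∧ M.P (π n) (π (n+1)) = 0} = 0 := by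
  classical
  have : Countable (Fin (n+2) → S) := Finite.to_countable
  have hsub : {π : ℕ → S | π 0 = s ∧ M.P (π n) (π (n+1)) = 0} ⊆
      ⋃ v : Fin (n+2) → S,
        {π : ℕ → S | (∀ i ≤ n+1, π i = v ⟨min i (n+1), by omega⟩) ∧
          v ⟨0, by omega⟩ = s ∧ M.P (v ⟨n, by omega⟩) (v ⟨n+1, by omega⟩) = 0} := by
    intro π hπ
    refine Set.mem_iUnion.2 ⟨fun i => π i.1, ?_, ?_, ?_⟩
    · intro i hi
      simp only [Set.mem_setOf_eq]
      congr 1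
      omega
    · exact hπ.1
    · exact hπ.2
  refine measure_mono_null hsub (measure_iUnion_null fun v => ?_)
  by_cases hv : v ⟨0, by omega⟩ = s ∧ M.P (v ⟨n, by omega⟩) (v ⟨n+1, by omega⟩) = 0
  · have h0 : μ {π : ℕ → S | ∀ i ≤ n+1, π i = v ⟨min i (n+1), by omega⟩} = 0 := by
      have hc := hμ.2 (n+1) (fun i => v ⟨min i (n+1), by omega⟩) (by simpa using hv.1)
      refine Eq.trans hc ?_
      apply Finset.prod_eq_zero (Finset.self_mem_range_succ n)
      have h1 : min n (n+1) = n := by omega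
      simp [h1, hv.2]
    exact measure_mono_null (fun π hπ => hπ.1) h0
  · have he : {π : ℕ → S | (∀ i ≤ n+1, π i = v ⟨min i (n+1), by omega⟩) ∧
        v ⟨0, by omega⟩ = s ∧ M.P (v ⟨n, by omega⟩) (v ⟨n+1, by omega⟩) = 0} = ∅ := by
      ext π
      simp only [Set.mem_setOf_eq, Set.mem_empty_iff_false, iff_false]
      intro h
      exact hv ⟨h.2.1, h.2.2⟩
    rw [he]; simp

lemma isPath_one (M : qDTMC S AP) (s : S) (μ : Measure (ℕ → S))
    (hμ : M.IsPathMeasure s μ) : μ {π : ℕ → S | M.IsPath s π} = 1 := by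
  have hprob : IsProbabilityMeasure μ := hμ.1
  have hcompl : μ {π : ℕ → S | M.IsPath s π}ᶜ = 0 := by
    have hsub : {π : ℕ → S | M.IsPath s π}ᶜ ⊆
        {π : ℕ → S | π 0 = s}ᶜ ∪ ⋃ n, {π : ℕ → S | π 0 = s ∧ M.P (π n) (π (n+1)) = 0} := by
      intro π hπ
      simp only [Set.mem_compl_iff, Set.mem_setOf_eq, qDTMC.IsPath, not_and, not_forall] at hπ
      by_cases h0 : π 0 = s
      · obtain ⟨n, hn⟩ := hπ h0
        refine Or.inr (Set.mem_iUnion.2 ⟨n, h0, ?_⟩)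
        simpa [pos_iff_ne_zero, not_not] using hn
      · exact Or.inl h0
    refine measure_mono_null hsub (measure_union_null ?_ (measure_iUnion_null
      fun n => bad_null M s μ hμ n))
    have h1 := first_coord_one M s μ hμ
    have hm : MeasurableSet {π : ℕ → S | π 0 = s} := mcoord (· = s) 0
    rw [measure_compl hm (measure_ne_top μ _), h1]
    simp
  have hm := isPath_meas M s
  exact (prob_compl_eq_zero_iff hm).mp hcompl

/-- The sets of paths from s on which ψ evaluates to T, F and ? are pairwise
disjoint measurable subsets of Path(s) whose union is Path(s); in particular their
measures sum to 1. -/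
theorem stmt14 {S AP : Type} [Fintype S] [Nonempty S] [Fintype AP]
    [MeasurableSpace S] [DiscreteMeasurableSpace S]
    (M : qDTMC S AP) (s : S) (μ : Measure (ℕ → S)) (hμ : M.IsPathMeasure s μ)
    (ψ : PForm AP) :
    MeasurableSet {π : ℕ → S | M.IsPath s π ∧ pEval M.L ψ π = TV.T} ∧
    MeasurableSet {π : ℕ → S | M.IsPath s π ∧ pEval M.L ψ π = TV.F} ∧
    MeasurableSet {π : ℕ → S | M.IsPath s π ∧ pEval M.L ψ π = TV.Q} ∧
    ({π : ℕ → S | M.IsPath s π ∧ pEval M.L ψ π = TV.T} ∩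
      {π : ℕ → S | M.IsPath s π ∧ pEval M.L ψ π = TV.F} = ∅) ∧
    ({π : ℕ → S | M.IsPath s π ∧ pEval M.L ψ π = TV.T} ∩
      {π : ℕ → S | M.IsPath s π ∧ pEval M.L ψ π = TV.Q} = ∅) ∧
    ({π : ℕ → S | M.IsPath s π ∧ pEval M.L ψ π = TV.F} ∩
      {π : ℕ → S | M.IsPath s π ∧ pEval M.L ψ π = TV.Q} = ∅) ∧
    ({π : ℕ → S | M.IsPath s π ∧ pEval M.L ψ π = TV.T} ∪
      {π : ℕ → S | M.IsPath s π ∧ pEval M.L ψ π = TV.F} ∪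
      {π : ℕ → S | M.IsPath s π ∧ pEval M.L ψ π = TV.Q} = {π : ℕ → S | M.IsPath s π}) ∧
    (μ {π : ℕ → S | M.IsPath s π ∧ pEval M.L ψ π = TV.T} +
      μ {π : ℕ → S | M.IsPath s π ∧ pEval M.L ψ π = TV.F} +
      μ {π : ℕ → S | M.IsPath s π ∧ pEval M.L ψ π = TV.Q} = 1) := by
    classical
  have mT : MeasurableSet {π : ℕ → S | M.IsPath s π ∧ pEval M.L ψ π = TV.T} :=
    mand (isPath_meas M s) (pEval_measT M.L ψ)
  have mF : MeasurableSet {π : ℕ → S | M.IsPath s π ∧ pEval M.L ψ π = TV.F} :=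
    mand (isPath_meas M s) (pEval_measF M.L ψ)
  have mQ : MeasurableSet {π : ℕ → S | M.IsPath s π ∧ pEval M.L ψ π = TV.Q} :=
    mand (isPath_meas M s) (pEval_measQ M.L ψ)
  have e1 : {π : ℕ → S | M.IsPath s π ∧ pEval M.L ψ π = TV.T} ∩
      {π : ℕ → S | M.IsPath s π ∧ pEval M.L ψ π = TV.F} = ∅ := by
    ext π
    simp only [Set.mem_inter_iff, Set.mem_setOf_eq, Set.mem_empty_iff_false, iff_false]
    rintro ⟨⟨-, h1⟩, -, h2⟩
    rw [h1] at h2; exact TV.noConfusion h2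
  have e2 : {π : ℕ → S | M.IsPath s π ∧ pEval M.L ψ π = TV.T} ∩
      {π : ℕ → S | M.IsPath s π ∧ pEval M.L ψ π = TV.Q} = ∅ := by
    ext π
    simp only [Set.mem_inter_iff, Set.mem_setOf_eq, Set.mem_empty_iff_false, iff_false]
    rintro ⟨⟨-, h1⟩, -, h2⟩
    rw [h1] at h2; exact TV.noConfusion h2
  have e3 : {π : ℕ → S | M.IsPath s π ∧ pEval M.L ψ π = TV.F} ∩
      {π : ℕ → S | M.IsPath s π ∧ pEval M.L ψ π = TV.Q} = ∅ := by
    ext π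
    simp only [Set.mem_inter_iff, Set.mem_setOf_eq, Set.mem_empty_iff_false, iff_false]
    rintro ⟨⟨-, h1⟩, -, h2⟩
    rw [h1] at h2; exact TV.noConfusion h2
  have eu : {π : ℕ → S | M.IsPath s π ∧ pEval M.L ψ π = TV.T} ∪
      {π : ℕ → S | M.IsPath s π ∧ pEval M.L ψ π = TV.F} ∪
      {π : ℕ → S | M.IsPath s π ∧ pEval M.L ψ π = TV.Q} = {π : ℕ → S | M.IsPath s π} := by
    ext π
    simp only [Set.mem_union, Set.mem_setOf_eq]
    constructor
    · rintro ((⟨h, -⟩ | ⟨h, -⟩) | ⟨h, -⟩) <;> exact h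
    · intro h
      cases hv : pEval M.L ψ π
      · exact Or.inl (Or.inr ⟨h, rfl⟩)
      · exact Or.inr ⟨h, rfl⟩
      · exact Or.inl (Or.inl ⟨h, rfl⟩)
  refine ⟨mT, mF, mQ, e1, e2, e3, eu, ?_⟩
  have d1 : Disjoint {π : ℕ → S | M.IsPath s π ∧ pEval M.L ψ π = TV.T}
      {π : ℕ → S | M.IsPath s π ∧ pEval M.L ψ π = TV.F} :=
    Set.disjoint_iff_inter_eq_empty.2 e1
  have d2 : Disjoint ({π : ℕ → S | M.IsPath s π ∧ pEval M.L ψ π = TV.T} ∪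
      {π : ℕ → S | M.IsPath s π ∧ pEval M.L ψ π = TV.F})
      {π : ℕ → S | M.IsPath s π ∧ pEval M.L ψ π = TV.Q} :=
    Set.disjoint_union_left.2
      ⟨Set.disjoint_iff_inter_eq_empty.2 e2, Set.disjoint_iff_inter_eq_empty.2 e3⟩
  rw [← measure_union d1 mF, ← measure_union d2 mQ, eu]
  exact isPath_one M s μ hμ
end PathMeas
end

section
/- Let M be a qDTMC and Φ a negation-free state formula. For every state s ∈ S: (i) the three-valued evaluation (s, Φ) in M equals T if and only if s satisfies Φ under standard two-valued semantics in the binary DTMC M^(1) obtained by relabeling every ? to F; and (ii) (s, Φ) in M equals F if and only if s fails to satisfy Φ under standard two-valued semantics in the binary DTMC M^(2) obtained by relabeling every ? to T. (Correctness of the qMC algorithm for non-probabilistic state formulas.) -/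
open MeasureTheory

/-- Correctness of qMC for non-probabilistic state formulas: for every state s,
(i) (s, Φ) = T in M iff s satisfies Φ in M⁽¹⁾, and (ii) (s, Φ) = F in M iff
s fails Φ in M⁽²⁾. -/
theorem stmt15 {S AP : Type} [Fintype S] [Nonempty S] [Fintype AP]
    [MeasurableSpace S] [DiscreteMeasurableSpace S]
    (M : qDTMC S AP) (Φ : SForm AP) (s : S) :
    (sEval M.L Φ s = TV.T ↔ sSat M.L1 Φ s) ∧
    (sEval M.L Φ s = TV.F ↔ ¬ sSat M.L2 Φ s) := by
  induction Φ with
  | tt => simp [sEval, sSat]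
  | ff => simp [sEval, sSat]
  | atom a => exact ⟨Iff.rfl, not_not.symm⟩
  | and φ ψ ihφ ihψ =>
    obtain ⟨h1φ, h2φ⟩ := ihφ; obtain ⟨h1ψ, h2ψ⟩ := ihψ
    constructor
    · rw [show sSat M.L1 (SForm.and φ ψ) s = (sSat M.L1 φ s ∧ sSat M.L1 ψ s) from rfl,
        ← h1φ, ← h1ψ]
      show (sEval M.L φ s).and (sEval M.L ψ s) = TV.T ↔ _
      cases sEval M.L φ s <;> cases sEval M.L ψ s <;> simp [TV.and]
    · rw [show sSat M.L2 (SForm.and φ ψ) s = (sSat M.L2 φ s ∧ sSat M.L2 ψ s) from rfl]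
      rw [not_and_or, ← h2φ, ← h2ψ]
      show (sEval M.L φ s).and (sEval M.L ψ s) = TV.F ↔ _
      cases sEval M.L φ s <;> cases sEval M.L ψ s <;> simp [TV.and]
  | or φ ψ ihφ ihψ =>
    obtain ⟨h1φ, h2φ⟩ := ihφ; obtain ⟨h1ψ, h2ψ⟩ := ihψ
    constructor
    · rw [show sSat M.L1 (SForm.or φ ψ) s = (sSat M.L1 φ s ∨ sSat M.L1 ψ s) from rfl,
        ← h1φ, ← h1ψ]
      show (sEval M.L φ s).or (sEval M.L ψ s) = TV.T ↔ _
      cases sEval M.L φ s <;> cases sEval M.L ψ s <;> simp [TV.or]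
    · rw [show sSat M.L2 (SForm.or φ ψ) s = (sSat M.L2 φ s ∨ sSat M.L2 ψ s) from rfl]
      rw [not_or, ← h2φ, ← h2ψ]
      show (sEval M.L φ s).or (sEval M.L ψ s) = TV.F ↔ _
      cases sEval M.L φ s <;> cases sEval M.L ψ s <;> simp [TV.or]
end
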